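/- arXiv:1409.3588 — 4 statements merged into one kernel-verified Lean document; each statement's English description precedes it below -/
import Mathlib

section
/- For every ring size n ≥ 1, every parameter η ∈ [0,1] and every configuration c : ZMod n → Fin 2, the one-step distribution of the traffic-majority rule started from the inversion of c equals the pushforward under inversion of the one-step distribution started from c: as PMFs on configurations, Φη(c̄) = PMF.map (inversion) (Φη(c)). -/
open scoped ENNReal

/-- A configuration of the ring of `n` cells, each in a state from `Fin 2`. -/
abbrev Config (n : ℕ) := ZMod n → Fin 2

/-- The traffic-majority local rule `φ_η`. -/
def phi (η : ℝ) (a b c : Fin 2) : ℝ :=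
  if b = 0 then
    if a = 1 then (if c = 1 then 1 else 1 - η) else 0
  else
    if a = 0 ∧ c = 0 then 0 else if a = 1 ∧ c = 0 then η else 1

lemma phi_nonneg {η : ℝ} (h0 : 0 ≤ η) (h1 : η ≤ 1) (a b c : Fin 2) :
    0 ≤ phi η a b c := by
  unfold phi; split_ifs <;> linarith

lemma phi_le_one {η : ℝ} (h0 : 0 ≤ η) (h1 : η ≤ 1) (a b c : Fin 2) :
    phi η a b c ≤ 1 := by
  unfold phi; split_ifs <;> linarith

/-- The probability (as an extended nonnegative real) that, starting from
configuration `c`, the cell at `x` is in state `σ` after one step. -/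
noncomputable def cellWeight (n : ℕ) (η : ℝ) (c : Config n) (x : ZMod n) (σ : Fin 2) : ℝ≥0∞ :=
  if σ = 1 then ENNReal.ofReal (phi η (c (x - 1)) (c x) (c (x + 1)))
  else ENNReal.ofReal (1 - phi η (c (x - 1)) (c x) (c (x + 1)))

/-- The probability of the transition `c → c'` in one step: the cells are
updated independently. -/
noncomputable def stepFun (n : ℕ) [NeZero n] (η : ℝ) (c c' : Config n) : ℝ≥0∞ :=
  ∏ x : ZMod n, cellWeight n η c x (c' x)

lemma stepFun_sum (n : ℕ) [NeZero n] {η : ℝ} (h0 : 0 ≤ η) (h1 : η ≤ 1)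
    (c : Config n) : ∑ c' : Config n, stepFun n η c c' = 1 := by
  have h := Finset.prod_univ_sum (fun _ : ZMod n => (Finset.univ : Finset (Fin 2)))
    (fun x σ => cellWeight n η c x σ)
  rw [Fintype.piFinset_univ] at h
  have h2 : ∀ x : ZMod n, ∑ σ : Fin 2, cellWeight n η c x σ = 1 := by
    intro x
    rw [Fin.sum_univ_two]
    simp only [cellWeight]
    norm_num
    rw [← ENNReal.ofReal_add (by linarith [phi_le_one h0 h1 (c (x-1)) (c x) (c (x+1))])
      (phi_nonneg h0 h1 (c (x-1)) (c x) (c (x+1)))]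
    norm_num
  rw [Finset.prod_congr rfl (fun x _ => h2 x), Finset.prod_const_one] at h
  exact h.symm

/-- The global transition `Φ_η` of the traffic-majority rule, as a PMF. -/
noncomputable def step (n : ℕ) [NeZero n] (η : ℝ) (h0 : 0 ≤ η) (h1 : η ≤ 1) (c : Config n) :
    PMF (Config n) :=
  PMF.ofFintype (stepFun n η c) (stepFun_sum n h0 h1 c)

/-- The `t`-step distribution `Φ_η^t(c)`, obtained by `t`-fold monadic bind. -/
noncomputable def iter (n : ℕ) [NeZero n] (η : ℝ) (h0 : 0 ≤ η) (h1 : η ≤ 1) :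
    ℕ → Config n → PMF (Config n)
  | 0, c => PMF.pure c
  | (t + 1), c => (step n η h0 h1 c).bind (iter n η h0 h1 t)

/-- The inversion `c̄` of a configuration: `c̄(x) = 1 - c(-x)`. -/
def conf_inv (n : ℕ) (c : Config n) : Config n := fun x => 1 - c (-x)

/-- The constant configuration with all cells in state `σ`. -/
def endSt (n : ℕ) (σ : Fin 2) : Config n := fun _ => σ

/-- The number of cells of `c` in state 1. -/
def ones (n : ℕ) [NeZero n] (c : Config n) : ℕ :=
  (Finset.univ.filter fun x => c x = 1).card

/-- The correct end state for the configuration `c` (`n` odd):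
`e₁` if more than half of the cells are in state 1, and `e₀` otherwise. -/
def target (n : ℕ) [NeZero n] (c : Config n) : Config n :=
  if n < 2 * ones n c then endSt n 1 else endSt n 0

/-- The 1-block of length `ℓ`. -/
def block (n ℓ : ℕ) : Config n := fun x => if x.val < ℓ then 1 else 0

lemma phi_compl (η : ℝ) (a b c : Fin 2) :
    phi η (1 - c) (1 - b) (1 - a) = 1 - phi η a b c := by
  fin_cases a <;> fin_cases b <;> fin_cases c <;> simp [phi] <;> ring

lemma conf_inv_involutive (n : ℕ) : Function.Involutive (conf_inv n) := by
  intro c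
  funext x
  simp only [conf_inv, neg_neg]
  have : ∀ a : Fin 2, 1 - (1 - a) = a := by decide
  exact this _

lemma cellWeight_inv (n : ℕ) (η : ℝ) (c : Config n) (x : ZMod n) (σ : Fin 2) :
    cellWeight n η (conf_inv n c) x σ = cellWeight n η c (-x) (1 - σ) := by
  have key : phi η (conf_inv n c (x - 1)) (conf_inv n c x) (conf_inv n c (x + 1))
      = 1 - phi η (c (-x - 1)) (c (-x)) (c (-x + 1)) := by
    have h1 : -(x - 1) = -x + 1 := by ring
    have h2 : -(x + 1) = -x - 1 := by ring
    simp only [conf_inv, h1, h2]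
    exact phi_compl η (c (-x - 1)) (c (-x)) (c (-x + 1))
  fin_cases σ <;> simp [cellWeight, key] <;> ring_nf

lemma stepFun_inv (n : ℕ) [NeZero n] (η : ℝ) (c c' : Config n) :
    stepFun n η (conf_inv n c) (conf_inv n c') = stepFun n η c c' := by
  unfold stepFun
  have h : ∀ x : ZMod n, cellWeight n η (conf_inv n c) x (conf_inv n c' x)
      = cellWeight n η c (-x) (c' (-x)) := by
    intro x
    rw [cellWeight_inv]
    congr 1
    show 1 - (1 - c' (-x)) = c' (-x)
    have : ∀ a : Fin 2, 1 - (1 - a) = a := by decide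
    exact this _
  rw [Finset.prod_congr rfl (fun x _ => h x)]
  exact Finset.prod_equiv (Equiv.neg (ZMod n)) (by simp) (by simp)

/-- the one-step distribution of the traffic-majority rule started
from the inversion of `c` equals the pushforward under inversion of the
one-step distribution started from `c`. -/
theorem step_inv (n : ℕ) [NeZero n] (η : ℝ) (h0 : 0 ≤ η) (h1 : η ≤ 1)
    (c : Config n) :
    step n η h0 h1 (conf_inv n c) = PMF.map (conf_inv n) (step n η h0 h1 c) := by
  ext d
  rw [PMF.map_apply]
  rw [tsum_eq_single (conf_inv n d)]
  · simp only [conf_inv_involutive n d, if_true]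
    show (step n η h0 h1 (conf_inv n c)) d = (step n η h0 h1 c) (conf_inv n d)
    simp only [step, PMF.ofFintype_apply]
    rw [← stepFun_inv n η c (conf_inv n d), conf_inv_involutive n d]
  · intro b hb
    rw [if_neg]
    intro hd
    exact hb (by rw [hd, conf_inv_involutive])
end

section
/- (Single step behaviour, Phase I with separated boundaries) Let n ∈ ℕ, η ∈ [0,1] and integers b₁, b₂ with 1 ≤ b₁ < b₂ ≤ n−3 and b₂−b₁ even. Let c(b₁,b₂) denote the configuration on ZMod n whose cells in state 1 are exactly those x with x.val ≤ b₁, or with b₁ ≤ x.val ≤ b₂ and x.val ≡ b₁ (mod 2). Then the one-step PMF of the traffic-majority rule from c(b₁,b₂) is supported on exactly four configurations, with probabilities: Φη(c(b₁,b₂))(c(b₁−1,b₂+1)) = (1−η)², Φη(c(b₁,b₂))(c(b₁−1,b₂−1)) = η(1−η), Φη(c(b₁,b₂))(c(b₁+1,b₂+1)) = η(1−η), Φη(c(b₁,b₂))(c(b₁+1,b₂−1)) = η², and Φη(c(b₁,b₂))(c′) = 0 for every configuration c′ not among these four. -/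
open scoped ENNReal

/-- The Phase-I configuration `c(b₁,b₂)`: a 1-block from position 0 to `b₁`
followed by an alternating 01-sequence ending with a 1 at position `b₂`. Its
cells in state 1 are exactly those `x` with `x.val ≤ b₁`, or with
`b₁ ≤ x.val ≤ b₂` and `x.val ≡ b₁ (mod 2)`. -/
def cfg (n b₁ b₂ : ℕ) : Config n := fun x =>
  if x.val ≤ b₁ ∨ (b₁ ≤ x.val ∧ x.val ≤ b₂ ∧ x.val % 2 = b₁ % 2) then 1 else 0


lemma valcast (n : ℕ) [NeZero n] (x : ZMod n) : ((x.val : ℕ) : ZMod n) = x := by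
  simp [ZMod.natCast_val, ZMod.cast_id]
lemma val_add_one (n : ℕ) [NeZero n] (x : ZMod n) (h : x.val + 1 < n) : (x+1).val = x.val + 1 := by
  rw [← valcast n x, ← Nat.cast_one, ← Nat.cast_add, ZMod.val_natCast_of_lt h,
      ZMod.val_natCast_of_lt (by omega)]
lemma val_add_one_top (n : ℕ) [NeZero n] (x : ZMod n) (h : x.val + 1 = n) : (x+1).val = 0 := by
  have h2 : x + 1 = 0 := by
    rw [← valcast n x, ← Nat.cast_one, ← Nat.cast_add, h]; simp
  rw [h2, ZMod.val_zero]
lemma val_sub_one (n : ℕ) [NeZero n] (x : ZMod n) (h : 1 ≤ x.val) : (x-1).val = x.val - 1 := by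
  have hx : x - 1 = ((x.val - 1 : ℕ) : ZMod n) := by
    have h3 : x = ((x.val - 1 : ℕ) : ZMod n) + 1 := by
      conv_lhs => rw [← valcast n x]
      rw [show x.val = (x.val-1)+1 from by omega]; push_cast; ring
    conv_lhs => rw [h3]
    exact add_sub_cancel_right _ _
  rw [hx, ZMod.val_natCast_of_lt (by have := x.val_lt; omega)]
lemma val_sub_one_zero (n : ℕ) [NeZero n] (x : ZMod n) (h : x.val = 0) (h2 : 2 ≤ n) : (x-1).val = n - 1 := by
  have hx : x = 0 := by rw [← valcast n x, h]; simp
  rw [hx, zero_sub, show (-1 : ZMod n) = ((n-1 : ℕ) : ZMod n) by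
      rw [Nat.cast_sub (by omega : 1 ≤ n)]; simp,
    ZMod.val_natCast_of_lt (by omega)]

lemma cfg_key (n a b : ℕ) (y : ZMod n) :
    cfg n a b y = if y.val ≤ a ∨ (a ≤ y.val ∧ y.val ≤ b ∧ y.val % 2 = a % 2) then 1 else 0 := rfl


lemma phi_eval (n : ℕ) [NeZero n] (η : ℝ) (b₁ b₂ : ℕ) (hb1 : 1 ≤ b₁) (hb12 : b₁ + 2 ≤ b₂)
    (hn : b₂ + 3 ≤ n) (hpar : b₂ % 2 = b₁ % 2) (x : ZMod n) :
    phi η (cfg n b₁ b₂ (x-1)) (cfg n b₁ b₂ x) (cfg n b₁ b₂ (x+1)) =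
      (if x.val = b₁ then η else if x.val = b₂ + 1 then 1 - η
       else if cfg n (b₁-1) (b₂-1) x = 1 then (1:ℝ) else 0) := by
  have hk := x.val_lt
  by_cases h1 : x.val = 0
  · -- (0,1,1) -> 1
    have hm := val_sub_one_zero n x h1 (by omega)
    have hp := val_add_one n x (by omega)
    have ha : cfg n b₁ b₂ (x-1) = 0 := by rw [cfg_key, hm]; exact if_neg (by omega)
    have hb : cfg n b₁ b₂ x = 1 := by rw [cfg_key]; exact if_pos (by omega)
    have hc : cfg n b₁ b₂ (x+1) = 1 := by rw [cfg_key, hp]; exact if_pos (by omega)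
    have hd : cfg n (b₁-1) (b₂-1) x = 1 := by rw [cfg_key]; exact if_pos (by omega)
    rw [ha, hb, hc, if_neg (show ¬ x.val = b₁ by omega),
        if_neg (show ¬ x.val = b₂ + 1 by omega), hd]
    norm_num [phi]
  · by_cases h9 : x.val = n - 1
    · -- (0,0,1) -> 0
      have hm := val_sub_one n x (by omega)
      have hp := val_add_one_top n x (by omega)
      have ha : cfg n b₁ b₂ (x-1) = 0 := by rw [cfg_key, hm]; exact if_neg (by omega)
      have hb : cfg n b₁ b₂ x = 0 := by rw [cfg_key]; exact if_neg (by omega)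
      have hc : cfg n b₁ b₂ (x+1) = 1 := by rw [cfg_key, hp]; exact if_pos (by omega)
      have hd : cfg n (b₁-1) (b₂-1) x = 0 := by rw [cfg_key]; exact if_neg (by omega)
      rw [ha, hb, hc, if_neg (show ¬ x.val = b₁ by omega),
          if_neg (show ¬ x.val = b₂ + 1 by omega), hd]
      norm_num [phi]
    · have hm := val_sub_one n x (by omega)
      have hp := val_add_one n x (by omega)
      by_cases h2 : x.val < b₁
      · -- (1,1,1) -> 1
        have ha : cfg n b₁ b₂ (x-1) = 1 := by rw [cfg_key, hm]; exact if_pos (by omega)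
        have hb : cfg n b₁ b₂ x = 1 := by rw [cfg_key]; exact if_pos (by omega)
        have hc : cfg n b₁ b₂ (x+1) = 1 := by rw [cfg_key, hp]; exact if_pos (by omega)
        have hd : cfg n (b₁-1) (b₂-1) x = 1 := by rw [cfg_key]; exact if_pos (by omega)
        rw [ha, hb, hc, if_neg (show ¬ x.val = b₁ by omega),
            if_neg (show ¬ x.val = b₂ + 1 by omega), hd]
        norm_num [phi]
      · by_cases h3 : x.val = b₁
        · -- (1,1,0) -> η
          have ha : cfg n b₁ b₂ (x-1) = 1 := by rw [cfg_key, hm]; exact if_pos (by omega)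
          have hb : cfg n b₁ b₂ x = 1 := by rw [cfg_key]; exact if_pos (by omega)
          have hc : cfg n b₁ b₂ (x+1) = 0 := by rw [cfg_key, hp]; exact if_neg (by omega)
          rw [ha, hb, hc, if_pos h3]
          norm_num [phi]
        · by_cases h4 : x.val < b₂
          · by_cases hpx : x.val % 2 = b₁ % 2
            · -- (0,1,0) -> 0
              have ha : cfg n b₁ b₂ (x-1) = 0 := by rw [cfg_key, hm]; exact if_neg (by omega)
              have hb : cfg n b₁ b₂ x = 1 := by rw [cfg_key]; exact if_pos (by omega)
              have hc : cfg n b₁ b₂ (x+1) = 0 := by rw [cfg_key, hp]; exact if_neg (by omega)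
              have hd : cfg n (b₁-1) (b₂-1) x = 0 := by rw [cfg_key]; exact if_neg (by omega)
              rw [ha, hb, hc, if_neg (show ¬ x.val = b₁ by omega),
                  if_neg (show ¬ x.val = b₂ + 1 by omega), hd]
              norm_num [phi]
            · -- (1,0,1) -> 1
              have ha : cfg n b₁ b₂ (x-1) = 1 := by rw [cfg_key, hm]; exact if_pos (by omega)
              have hb : cfg n b₁ b₂ x = 0 := by rw [cfg_key]; exact if_neg (by omega)
              have hc : cfg n b₁ b₂ (x+1) = 1 := by rw [cfg_key, hp]; exact if_pos (by omega)
              have hd : cfg n (b₁-1) (b₂-1) x = 1 := by rw [cfg_key]; exact if_pos (by omega)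
              rw [ha, hb, hc, if_neg (show ¬ x.val = b₁ by omega),
                  if_neg (show ¬ x.val = b₂ + 1 by omega), hd]
              norm_num [phi]
          · by_cases h5 : x.val = b₂
            · -- (0,1,0) -> 0
              have ha : cfg n b₁ b₂ (x-1) = 0 := by rw [cfg_key, hm]; exact if_neg (by omega)
              have hb : cfg n b₁ b₂ x = 1 := by rw [cfg_key]; exact if_pos (by omega)
              have hc : cfg n b₁ b₂ (x+1) = 0 := by rw [cfg_key, hp]; exact if_neg (by omega)
              have hd : cfg n (b₁-1) (b₂-1) x = 0 := by rw [cfg_key]; exact if_neg (by omega)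
              rw [ha, hb, hc, if_neg (show ¬ x.val = b₁ by omega),
                  if_neg (show ¬ x.val = b₂ + 1 by omega), hd]
              norm_num [phi]
            · by_cases h6 : x.val = b₂ + 1
              · -- (1,0,0) -> 1-η
                have ha : cfg n b₁ b₂ (x-1) = 1 := by rw [cfg_key, hm]; exact if_pos (by omega)
                have hb : cfg n b₁ b₂ x = 0 := by rw [cfg_key]; exact if_neg (by omega)
                have hc : cfg n b₁ b₂ (x+1) = 0 := by rw [cfg_key, hp]; exact if_neg (by omega)
                rw [ha, hb, hc, if_neg (show ¬ x.val = b₁ by omega), if_pos h6]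
                norm_num [phi]
              · -- (0,0,0) -> 0
                have ha : cfg n b₁ b₂ (x-1) = 0 := by rw [cfg_key, hm]; exact if_neg (by omega)
                have hb : cfg n b₁ b₂ x = 0 := by rw [cfg_key]; exact if_neg (by omega)
                have hc : cfg n b₁ b₂ (x+1) = 0 := by rw [cfg_key, hp]; exact if_neg (by omega)
                have hd : cfg n (b₁-1) (b₂-1) x = 0 := by rw [cfg_key]; exact if_neg (by omega)
                rw [ha, hb, hc, if_neg (show ¬ x.val = b₁ by omega),
                    if_neg (show ¬ x.val = b₂ + 1 by omega), hd]
                norm_num [phi]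

lemma cellWeight_eval (n : ℕ) [NeZero n] (η : ℝ) (b₁ b₂ : ℕ) (hb1 : 1 ≤ b₁)
    (hb12 : b₁ + 2 ≤ b₂) (hn : b₂ + 3 ≤ n) (hpar : b₂ % 2 = b₁ % 2) (x : ZMod n) (σ : Fin 2) :
    cellWeight n η (cfg n b₁ b₂) x σ =
      if x.val = b₁ then (if σ = 1 then ENNReal.ofReal η else ENNReal.ofReal (1-η))
      else if x.val = b₂ + 1 then (if σ = 1 then ENNReal.ofReal (1-η) else ENNReal.ofReal η)
      else (if σ = cfg n (b₁-1) (b₂-1) x then 1 else 0) := by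
  unfold cellWeight
  rw [phi_eval n η b₁ b₂ hb1 hb12 hn hpar x]
  by_cases hx1 : x.val = b₁
  · simp only [if_pos hx1]
  · by_cases hx2 : x.val = b₂ + 1
    · simp only [if_neg hx1, if_pos hx2]
      rcases (show σ = 0 ∨ σ = 1 by omega) with hs|hs <;> simp [hs] <;> norm_num
    · simp only [if_neg hx1, if_neg hx2]
      rcases (show cfg n (b₁-1) (b₂-1) x = 0 ∨ cfg n (b₁-1) (b₂-1) x = 1 by omega) with h|h <;>
        rcases (show σ = 0 ∨ σ = 1 by omega) with hs|hs <;>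
          simp [h, hs] <;> norm_num

/-- Single step behaviour, Phase I with separated boundaries:
from `c(b₁,b₂)` with `1 ≤ b₁ < b₂ ≤ n - 3` and `b₂ - b₁` even, the one-step
PMF is supported on exactly four configurations, with the stated
probabilities. -/
theorem single_step_phaseI (n : ℕ) [NeZero n] (η : ℝ) (h0 : 0 ≤ η) (h1 : η ≤ 1)
    (b₁ b₂ : ℕ) (hb1 : 1 ≤ b₁) (hb12 : b₁ < b₂) (hb2 : b₂ ≤ n - 3)
    (heven : Even (b₂ - b₁)) :
    step n η h0 h1 (cfg n b₁ b₂) (cfg n (b₁ - 1) (b₂ + 1))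
        = ENNReal.ofReal ((1 - η) ^ 2) ∧
    step n η h0 h1 (cfg n b₁ b₂) (cfg n (b₁ - 1) (b₂ - 1))
        = ENNReal.ofReal (η * (1 - η)) ∧
    step n η h0 h1 (cfg n b₁ b₂) (cfg n (b₁ + 1) (b₂ + 1))
        = ENNReal.ofReal (η * (1 - η)) ∧
    step n η h0 h1 (cfg n b₁ b₂) (cfg n (b₁ + 1) (b₂ - 1))
        = ENNReal.ofReal (η ^ 2) ∧
    (∀ c' : Config n,
      c' ∉ ({cfg n (b₁ - 1) (b₂ + 1), cfg n (b₁ - 1) (b₂ - 1),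
             cfg n (b₁ + 1) (b₂ + 1), cfg n (b₁ + 1) (b₂ - 1)} : Set (Config n)) →
      step n η h0 h1 (cfg n b₁ b₂) c' = 0) := by
  obtain ⟨r, hr⟩ := heven
  have hb12' : b₁ + 2 ≤ b₂ := by omega
  have hpar : b₂ % 2 = b₁ % 2 := by omega
  have hn : b₂ + 3 ≤ n := by omega
  have h1η : (0:ℝ) ≤ 1 - η := by linarith
  set B₁ : ZMod n := ((b₁ : ℕ) : ZMod n) with hB₁
  set B₂ : ZMod n := ((b₂ + 1 : ℕ) : ZMod n) with hB₂
  have hB₁v : B₁.val = b₁ := ZMod.val_natCast_of_lt (by omega)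
  have hB₂v : B₂.val = b₂ + 1 := ZMod.val_natCast_of_lt (by omega)
  have hne : B₁ ≠ B₂ := by
    intro h; rw [h, hB₂v] at hB₁v; omega
  have hxB₁ : ∀ x : ZMod n, x.val = b₁ → x = B₁ := by
    intro x h; rw [← valcast n x, h, hB₁]
  have hxB₂ : ∀ x : ZMod n, x.val = b₂ + 1 → x = B₂ := by
    intro x h; rw [← valcast n x, h, hB₂]
  have master : ∀ c' : Config n, stepFun n η (cfg n b₁ b₂) c' =
      (if c' B₁ = 1 then ENNReal.ofReal η else ENNReal.ofReal (1-η)) *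
      ((if c' B₂ = 1 then ENNReal.ofReal (1-η) else ENNReal.ofReal η) *
       ∏ x ∈ Finset.univ \ {B₁, B₂}, (if c' x = cfg n (b₁-1) (b₂-1) x then 1 else 0)) := by
    intro c'
    unfold stepFun
    rw [← Finset.prod_sdiff (Finset.subset_univ ({B₁, B₂} : Finset (ZMod n))),
        Finset.prod_pair hne]
    have w₁ : cellWeight n η (cfg n b₁ b₂) B₁ (c' B₁) =
        if c' B₁ = 1 then ENNReal.ofReal η else ENNReal.ofReal (1-η) := by
      rw [cellWeight_eval n η b₁ b₂ hb1 hb12' hn hpar, if_pos hB₁v]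
    have w₂ : cellWeight n η (cfg n b₁ b₂) B₂ (c' B₂) =
        if c' B₂ = 1 then ENNReal.ofReal (1-η) else ENNReal.ofReal η := by
      rw [cellWeight_eval n η b₁ b₂ hb1 hb12' hn hpar, if_neg (by omega : ¬ B₂.val = b₁),
          if_pos hB₂v]
    rw [w₁, w₂, Finset.prod_congr rfl (fun x hx => ?_)]
    · ring
    · rw [Finset.mem_sdiff] at hx
      have hx1 : ¬ x.val = b₁ := fun h => by
        exact absurd (by simp [hxB₁ x h]) hx.2
      have hx2 : ¬ x.val = b₂ + 1 := fun h => by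
        exact absurd (by simp [hxB₂ x h]) hx.2
      rw [cellWeight_eval n η b₁ b₂ hb1 hb12' hn hpar, if_neg hx1, if_neg hx2]
  have agree : ∀ (a b : ℕ), (a = b₁ - 1 ∨ a = b₁ + 1) → (b = b₂ - 1 ∨ b = b₂ + 1) →
      ∀ x : ZMod n, x ∈ Finset.univ \ ({B₁, B₂} : Finset (ZMod n)) →
        cfg n a b x = cfg n (b₁-1) (b₂-1) x := by
    intro a b ha hb x hx
    rw [Finset.mem_sdiff, Finset.mem_insert, Finset.mem_singleton] at hx
    have hx1 : ¬ x.val = b₁ := fun h => hx.2 (Or.inl (hxB₁ x h))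
    have hx2 : ¬ x.val = b₂ + 1 := fun h => hx.2 (Or.inr (hxB₂ x h))
    rw [cfg_key, cfg_key]
    exact if_congr (by rcases ha with rfl|rfl <;> rcases hb with rfl|rfl <;> omega) rfl rfl
  have vB₁low : ∀ b, cfg n (b₁-1) b B₁ = 0 := fun b => by
    rw [cfg_key, hB₁v]; exact if_neg (by omega)
  have vB₁high : ∀ b, cfg n (b₁+1) b B₁ = 1 := fun b => by
    rw [cfg_key, hB₁v]; exact if_pos (by omega)
  have vB₂plus : ∀ a, (a = b₁ - 1 ∨ a = b₁ + 1) → cfg n a (b₂+1) B₂ = 1 := fun a ha => by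
    rw [cfg_key, hB₂v]; exact if_pos (by rcases ha with rfl|rfl <;> omega)
  have vB₂minus : ∀ a, (a = b₁ - 1 ∨ a = b₁ + 1) → cfg n a (b₂-1) B₂ = 0 := fun a ha => by
    rw [cfg_key, hB₂v]; exact if_neg (by rcases ha with rfl|rfl <;> omega)
  have happ : ∀ c', step n η h0 h1 (cfg n b₁ b₂) c' = stepFun n η (cfg n b₁ b₂) c' := by
    intro c'; simp [step, PMF.ofFintype_apply]
  have prod_one : ∀ (a b : ℕ), (a = b₁ - 1 ∨ a = b₁ + 1) → (b = b₂ - 1 ∨ b = b₂ + 1) →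
      (∏ x ∈ Finset.univ \ ({B₁, B₂} : Finset (ZMod n)),
        (if cfg n a b x = cfg n (b₁-1) (b₂-1) x then (1:ℝ≥0∞) else 0)) = 1 := by
    intro a b ha hb
    exact Finset.prod_eq_one (fun x hx => if_pos (agree a b ha hb x hx))
  refine ⟨?_, ?_, ?_, ?_, ?_⟩
  · rw [happ, master, prod_one _ _ (Or.inl rfl) (Or.inr rfl),
        if_neg (show ¬ cfg n (b₁-1) (b₂+1) B₁ = 1 by rw [vB₁low]; decide),
        if_pos (vB₂plus _ (Or.inl rfl)), mul_one,
        ← ENNReal.ofReal_mul h1η, sq]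
  · rw [happ, master, prod_one _ _ (Or.inl rfl) (Or.inl rfl),
        if_neg (show ¬ cfg n (b₁-1) (b₂-1) B₁ = 1 by rw [vB₁low]; decide),
        if_neg (show ¬ cfg n (b₁-1) (b₂-1) B₂ = 1 by rw [vB₂minus _ (Or.inl rfl)]; decide),
        mul_one, ← ENNReal.ofReal_mul h1η]
    rw [mul_comm η (1-η)]
  · rw [happ, master, prod_one _ _ (Or.inr rfl) (Or.inr rfl),
        if_pos (vB₁high _), if_pos (vB₂plus _ (Or.inr rfl)), mul_one,
        ← ENNReal.ofReal_mul h0]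
  · rw [happ, master, prod_one _ _ (Or.inr rfl) (Or.inl rfl),
        if_pos (vB₁high _),
        if_neg (show ¬ cfg n (b₁+1) (b₂-1) B₂ = 1 by rw [vB₂minus _ (Or.inr rfl)]; decide),
        mul_one, ← ENNReal.ofReal_mul h0, sq]
  · intro c' hc'
    simp only [Set.mem_insert_iff, Set.mem_singleton_iff, not_or] at hc'
    rw [happ, master]
    by_cases hall : ∀ x ∈ Finset.univ \ ({B₁, B₂} : Finset (ZMod n)),
        c' x = cfg n (b₁-1) (b₂-1) x
    · exfalso
      have ext : ∀ (a b : ℕ), (a = b₁ - 1 ∨ a = b₁ + 1) → (b = b₂ - 1 ∨ b = b₂ + 1) →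
          c' B₁ = cfg n a b B₁ → c' B₂ = cfg n a b B₂ → c' = cfg n a b := by
        intro a b ha hb h₁ h₂
        funext x
        by_cases hx1 : x = B₁
        · rw [hx1, h₁]
        · by_cases hx2 : x = B₂
          · rw [hx2, h₂]
          · have hmem : x ∈ Finset.univ \ ({B₁, B₂} : Finset (ZMod n)) := by
              simp [hx1, hx2]
            rw [hall x hmem, agree a b ha hb x hmem]
      rcases (show c' B₁ = 0 ∨ c' B₁ = 1 by omega) with h₁|h₁ <;>
        rcases (show c' B₂ = 0 ∨ c' B₂ = 1 by omega) with h₂|h₂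
      · exact hc'.2.1 (ext (b₁-1) (b₂-1) (Or.inl rfl) (Or.inl rfl)
          (by rw [h₁, vB₁low]) (by rw [h₂, vB₂minus _ (Or.inl rfl)]))
      · exact hc'.1 (ext (b₁-1) (b₂+1) (Or.inl rfl) (Or.inr rfl)
          (by rw [h₁, vB₁low]) (by rw [h₂, vB₂plus _ (Or.inl rfl)]))
      · exact hc'.2.2.2 (ext (b₁+1) (b₂-1) (Or.inr rfl) (Or.inl rfl)
          (by rw [h₁, vB₁high]) (by rw [h₂, vB₂minus _ (Or.inr rfl)]))
      · exact hc'.2.2.1 (ext (b₁+1) (b₂+1) (Or.inr rfl) (Or.inr rfl)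
          (by rw [h₁, vB₁high]) (by rw [h₂, vB₂plus _ (Or.inr rfl)]))
    · push_neg at hall
      obtain ⟨x, hx, hxe⟩ := hall
      rw [Finset.prod_eq_zero hx (show (if c' x = cfg n (b₁-1) (b₂-1) x then (1:ℝ≥0∞) else 0) = 0
        from if_neg hxe), mul_zero, mul_zero]
end

section
/- (Single step behaviour from a pure 1-block) Let n ∈ ℕ, η ∈ [0,1] and 2 ≤ ℓ ≤ n−3. Then the one-step PMF of the traffic-majority rule from the 1-block B(n,ℓ) is supported on exactly four configurations, with probabilities: Φη(B(n,ℓ))(c(ℓ−2,ℓ)) = (1−η)², Φη(B(n,ℓ))(B(n,ℓ−1)) = η(1−η), Φη(B(n,ℓ))(B(n,ℓ+1)) = η(1−η), Φη(B(n,ℓ))(B(n,ℓ)) = η², and Φη(B(n,ℓ))(c′) = 0 for every configuration c′ not among these four; here c(ℓ−2,ℓ) is the configuration whose cells in state 1 are exactly those x with x.val ≤ ℓ−2 or x.val = ℓ. -/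
open scoped ENNReal

/-- The configuration `c(ℓ-2, ℓ)`: its cells in state 1 are exactly those `x`
with `x.val ≤ ℓ - 2` or `x.val = ℓ`. -/
def cfgBlockStep (n ℓ : ℕ) : Config n := fun x =>
  if x.val ≤ ℓ - 2 ∨ x.val = ℓ then 1 else 0


section AuxSingleStep

lemma zmod_val_add_one' {n : ℕ} [NeZero n] (hn : 1 < n) (x : ZMod n) :
    (x + 1).val = (x.val + 1) % n := by
  rw [ZMod.val_add, ZMod.val_one_eq_one_mod, Nat.mod_eq_of_lt hn]

lemma zmod_val_sub_one' {n : ℕ} [NeZero n] (hn : 1 < n) (x : ZMod n) :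
    ((x - 1).val + 1) % n = x.val := by
  have := zmod_val_add_one' hn (x - 1)
  rw [sub_add_cancel] at this
  exact this.symm

lemma block_phi (n ℓ : ℕ) [NeZero n] (η : ℝ) (h2 : 2 ≤ ℓ) (hn : ℓ + 3 ≤ n) (x : ZMod n) :
    phi η (block n ℓ (x-1)) (block n ℓ x) (block n ℓ (x+1)) =
      if x.val < ℓ - 1 then 1 else if x.val = ℓ - 1 then η
      else if x.val = ℓ then 1 - η else 0 := by
  have hn1 : 1 < n := by omega
  have hv : x.val < n := ZMod.val_lt x
  have hu : (x-1).val < n := ZMod.val_lt _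
  have hw : (x+1).val < n := ZMod.val_lt _
  have hw1 : (x+1).val = (x.val+1) % n := zmod_val_add_one' hn1 x
  have hu1 : ((x-1).val + 1) % n = x.val := zmod_val_sub_one' hn1 x
  have hu2 : ((x-1).val = n - 1 ∧ x.val = 0) ∨ (x-1).val + 1 = x.val := by
    rcases Nat.lt_or_ge ((x-1).val + 1) n with h | h
    · right; rw [Nat.mod_eq_of_lt h] at hu1; exact hu1
    · left
      have he : (x-1).val + 1 = n := by omega
      rw [he, Nat.mod_self] at hu1
      omega
  have hw2 : (x.val = n - 1 ∧ (x+1).val = 0) ∨ (x+1).val = x.val + 1 := by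
    rcases Nat.lt_or_ge (x.val + 1) n with h | h
    · right; rw [hw1, Nat.mod_eq_of_lt h]
    · left
      have he : x.val + 1 = n := by omega
      rw [hw1, he, Nat.mod_self]
      omega
  have b1 : block n ℓ (x-1) = if (x-1).val < ℓ then 1 else 0 := rfl
  have b2 : block n ℓ x = if x.val < ℓ then 1 else 0 := rfl
  have b3 : block n ℓ (x+1) = if (x+1).val < ℓ then 1 else 0 := rfl
  rw [b1, b2, b3]
  rcases hu2 with ⟨hA, hB⟩ | hA <;> rcases hw2 with ⟨hC, hD⟩ | hC <;>
    split_ifs <;> first | (exfalso; omega) | rfl | (norm_num [phi])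

lemma cellWeight_block (n ℓ : ℕ) [NeZero n] (η : ℝ) (h2 : 2 ≤ ℓ) (hn : ℓ + 3 ≤ n)
    (x : ZMod n) (σ : Fin 2) :
    cellWeight n η (block n ℓ) x σ =
      if x.val < ℓ - 1 then (if σ = 1 then ENNReal.ofReal 1 else ENNReal.ofReal 0)
      else if x.val = ℓ - 1 then (if σ = 1 then ENNReal.ofReal η else ENNReal.ofReal (1 - η))
      else if x.val = ℓ then (if σ = 1 then ENNReal.ofReal (1-η) else ENNReal.ofReal η)
      else (if σ = 1 then ENNReal.ofReal 0 else ENNReal.ofReal 1) := by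
  rw [cellWeight, block_phi n ℓ η h2 hn x]
  split_ifs <;> norm_num

lemma ne_iff_val (n : ℕ) [NeZero n] (x : ZMod n) (m : ℕ) (hm : m < n) :
    x ≠ ((m : ℕ) : ZMod n) ↔ x.val ≠ m := by
  rw [not_iff_not]
  constructor
  · intro h; rw [h, ZMod.val_cast_of_lt hm]
  · intro h; apply ZMod.val_injective; rw [ZMod.val_cast_of_lt hm]; exact h

lemma stepFun_block_eq (n ℓ : ℕ) [NeZero n] (η : ℝ) (h2 : 2 ≤ ℓ) (hn : ℓ + 3 ≤ n)
    (c' : Config n)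
    (hout : ∀ x : ZMod n, x.val ≠ ℓ - 1 → x.val ≠ ℓ →
       c' x = if x.val < ℓ - 1 then 1 else 0) :
    stepFun n η (block n ℓ) c' =
      (cellWeight n η (block n ℓ) (((ℓ-1 : ℕ)) : ZMod n) (c' (((ℓ-1:ℕ)) : ZMod n))) *
      (cellWeight n η (block n ℓ) ((ℓ : ℕ) : ZMod n) (c' ((ℓ:ℕ) : ZMod n))) := by
  set a : ZMod n := ((ℓ-1 : ℕ) : ZMod n) with ha
  set b : ZMod n := ((ℓ : ℕ) : ZMod n) with hb
  have hal : (ℓ - 1) < n := by omega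
  have hbl : ℓ < n := by omega
  have hav : a.val = ℓ - 1 := ZMod.val_cast_of_lt hal
  have hbv : b.val = ℓ := ZMod.val_cast_of_lt hbl
  have hab : a ≠ b := by
    intro h; rw [h] at hav; omega
  have hsub : ({a, b} : Finset (ZMod n)) ⊆ Finset.univ := Finset.subset_univ _
  rw [stepFun, ← Finset.prod_sdiff hsub, Finset.prod_pair hab]
  have hone : ∀ x ∈ Finset.univ \ ({a, b} : Finset (ZMod n)),
      cellWeight n η (block n ℓ) x (c' x) = 1 := by
    intro x hx
    simp only [Finset.mem_sdiff, Finset.mem_insert, Finset.mem_singleton, not_or] at hx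
    obtain ⟨-, hxa, hxb⟩ := hx
    have hxa' : x.val ≠ ℓ - 1 := ((ne_iff_val n x (ℓ-1) hal).mp hxa)
    have hxb' : x.val ≠ ℓ := ((ne_iff_val n x ℓ hbl).mp hxb)
    rw [cellWeight_block n ℓ η h2 hn, hout x hxa' hxb']
    split_ifs <;> simp_all
  rw [Finset.prod_congr rfl hone, Finset.prod_const_one, one_mul]

lemma stepFun_block_zero (n ℓ : ℕ) [NeZero n] (η : ℝ) (h2 : 2 ≤ ℓ) (hn : ℓ + 3 ≤ n)
    (c' : Config n) (x0 : ZMod n) (hx1 : x0.val ≠ ℓ - 1) (hx2 : x0.val ≠ ℓ)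
    (hbad : c' x0 ≠ if x0.val < ℓ - 1 then 1 else 0) :
    stepFun n η (block n ℓ) c' = 0 := by
  apply Finset.prod_eq_zero (Finset.mem_univ x0)
  rw [cellWeight_block n ℓ η h2 hn]
  have hfin : ∀ σ : Fin 2, σ = 0 ∨ σ = 1 := by decide
  rcases hfin (c' x0) with h | h <;> rw [h] <;> rw [h] at hbad <;>
    split_ifs at hbad ⊢ <;> simp_all

lemma config_ext (n ℓ : ℕ) [NeZero n] (h2 : 2 ≤ ℓ) (hn : ℓ + 3 ≤ n) (c' d : Config n)
    (hc : ∀ x : ZMod n, x.val ≠ ℓ - 1 → x.val ≠ ℓ →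
       c' x = if x.val < ℓ - 1 then 1 else 0)
    (hd : ∀ x : ZMod n, x.val ≠ ℓ - 1 → x.val ≠ ℓ →
       d x = if x.val < ℓ - 1 then 1 else 0)
    (ha : c' (((ℓ-1:ℕ)) : ZMod n) = d (((ℓ-1:ℕ)) : ZMod n))
    (hb : c' ((ℓ:ℕ) : ZMod n) = d ((ℓ:ℕ) : ZMod n)) : c' = d := by
  have hal : (ℓ - 1) < n := by omega
  have hbl : ℓ < n := by omega
  funext x
  by_cases hxa : x = (((ℓ-1:ℕ)) : ZMod n)
  · rw [hxa]; exact ha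
  by_cases hxb : x = ((ℓ:ℕ) : ZMod n)
  · rw [hxb]; exact hb
  have hxa' : x.val ≠ ℓ - 1 := ((ne_iff_val n x (ℓ-1) hal).mp hxa)
  have hxb' : x.val ≠ ℓ := ((ne_iff_val n x ℓ hbl).mp hxb)
  rw [hc x hxa' hxb', hd x hxa' hxb']

end AuxSingleStep

/-- Single step behaviour from a pure 1-block: from `B(n,ℓ)`
with `2 ≤ ℓ ≤ n - 3`, the one-step PMF is supported on exactly four
configurations, with the stated probabilities. -/
theorem single_step_block (n : ℕ) [NeZero n] (η : ℝ) (h0 : 0 ≤ η) (h1 : η ≤ 1)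
    (ℓ : ℕ) (h2 : 2 ≤ ℓ) (hℓ : ℓ ≤ n - 3) :
    step n η h0 h1 (block n ℓ) (cfgBlockStep n ℓ) = ENNReal.ofReal ((1 - η) ^ 2) ∧
    step n η h0 h1 (block n ℓ) (block n (ℓ - 1)) = ENNReal.ofReal (η * (1 - η)) ∧
    step n η h0 h1 (block n ℓ) (block n (ℓ + 1)) = ENNReal.ofReal (η * (1 - η)) ∧
    step n η h0 h1 (block n ℓ) (block n ℓ) = ENNReal.ofReal (η ^ 2) ∧
    (∀ c' : Config n,
      c' ∉ ({cfgBlockStep n ℓ, block n (ℓ - 1), block n (ℓ + 1), block n ℓ} :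
          Set (Config n)) →
      step n η h0 h1 (block n ℓ) c' = 0) := by
  have hn : ℓ + 3 ≤ n := by omega
  have hal : (ℓ - 1) < n := by omega
  have hbl : ℓ < n := by omega
  set a : ZMod n := ((ℓ-1 : ℕ) : ZMod n) with hadef
  set b : ZMod n := ((ℓ : ℕ) : ZMod n) with hbdef
  have hav : a.val = ℓ - 1 := ZMod.val_cast_of_lt hal
  have hbv : b.val = ℓ := ZMod.val_cast_of_lt hbl
  -- weights at a and b
  have wA1 : cellWeight n η (block n ℓ) a 1 = ENNReal.ofReal η := by
    rw [cellWeight_block n ℓ η h2 hn, hav, if_neg (lt_irrefl _), if_pos rfl, if_pos rfl]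
  have wA0 : cellWeight n η (block n ℓ) a 0 = ENNReal.ofReal (1 - η) := by
    rw [cellWeight_block n ℓ η h2 hn, hav, if_neg (lt_irrefl _), if_pos rfl,
      if_neg (by decide)]
  have wB1 : cellWeight n η (block n ℓ) b 1 = ENNReal.ofReal (1 - η) := by
    rw [cellWeight_block n ℓ η h2 hn, hbv, if_neg (by omega), if_neg (by omega),
      if_pos rfl, if_pos rfl]
  have wB0 : cellWeight n η (block n ℓ) b 0 = ENNReal.ofReal η := by
    rw [cellWeight_block n ℓ η h2 hn, hbv, if_neg (by omega), if_neg (by omega),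
      if_pos rfl, if_neg (by decide)]
  -- values of the four configurations at a and b
  have e1a : cfgBlockStep n ℓ a = 0 := by
    simp only [cfgBlockStep, hav]; rw [if_neg (by omega)]
  have e1b : cfgBlockStep n ℓ b = 1 := by
    simp only [cfgBlockStep, hbv]; rw [if_pos (Or.inr trivial)]
  have e2a : block n (ℓ-1) a = 0 := by
    simp only [block, hav]; rw [if_neg (by omega)]
  have e2b : block n (ℓ-1) b = 0 := by
    simp only [block, hbv]; rw [if_neg (by omega)]
  have e3a : block n (ℓ+1) a = 1 := by
    simp only [block, hav]; rw [if_pos (by omega)]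
  have e3b : block n (ℓ+1) b = 1 := by
    simp only [block, hbv]; rw [if_pos (by omega)]
  have e4a : block n ℓ a = 1 := by
    simp only [block, hav]; rw [if_pos (by omega)]
  have e4b : block n ℓ b = 0 := by
    simp only [block, hbv]; rw [if_neg (by omega)]
  -- the four configurations agree with the forced pattern off {a, b}
  have hout1 : ∀ x : ZMod n, x.val ≠ ℓ - 1 → x.val ≠ ℓ →
      cfgBlockStep n ℓ x = if x.val < ℓ - 1 then 1 else 0 := by
    intro x hx1 hx2
    simp only [cfgBlockStep]
    rw [if_congr (show (x.val ≤ ℓ - 2 ∨ x.val = ℓ) ↔ x.val < ℓ - 1 by omega) rfl rfl]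
  have hout2 : ∀ x : ZMod n, x.val ≠ ℓ - 1 → x.val ≠ ℓ →
      block n (ℓ-1) x = if x.val < ℓ - 1 then 1 else 0 := by
    intro x _ _; rfl
  have hout3 : ∀ x : ZMod n, x.val ≠ ℓ - 1 → x.val ≠ ℓ →
      block n (ℓ+1) x = if x.val < ℓ - 1 then 1 else 0 := by
    intro x hx1 hx2
    simp only [block]
    rw [if_congr (show x.val < ℓ + 1 ↔ x.val < ℓ - 1 by omega) rfl rfl]
  have hout4 : ∀ x : ZMod n, x.val ≠ ℓ - 1 → x.val ≠ ℓ →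
      block n ℓ x = if x.val < ℓ - 1 then 1 else 0 := by
    intro x hx1 hx2
    simp only [block]
    rw [if_congr (show x.val < ℓ ↔ x.val < ℓ - 1 by omega) rfl rfl]
  have hstep : ∀ c' : Config n, step n η h0 h1 (block n ℓ) c' = stepFun n η (block n ℓ) c' :=
    fun c' => PMF.ofFintype_apply _ c'
  refine ⟨?_, ?_, ?_, ?_, ?_⟩
  · rw [hstep, stepFun_block_eq n ℓ η h2 hn _ hout1, ← hadef, ← hbdef, e1a, e1b, wA0, wB1,
      ← ENNReal.ofReal_mul (by linarith)]
    congr 1; ring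
  · rw [hstep, stepFun_block_eq n ℓ η h2 hn _ hout2, ← hadef, ← hbdef, e2a, e2b, wA0, wB0,
      ← ENNReal.ofReal_mul (by linarith)]
    congr 1; ring
  · rw [hstep, stepFun_block_eq n ℓ η h2 hn _ hout3, ← hadef, ← hbdef, e3a, e3b, wA1, wB1,
      ← ENNReal.ofReal_mul h0]
  · rw [hstep, stepFun_block_eq n ℓ η h2 hn _ hout4, ← hadef, ← hbdef, e4a, e4b, wA1, wB0,
      ← ENNReal.ofReal_mul h0]
    congr 1; ring
  · intro c' hc'
    rw [hstep]
    by_cases hgood : ∀ x : ZMod n, x.val ≠ ℓ - 1 → x.val ≠ ℓ →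
        c' x = if x.val < ℓ - 1 then 1 else 0
    · exfalso
      apply hc'
      simp only [Set.mem_insert_iff, Set.mem_singleton_iff]
      have hfin : ∀ σ : Fin 2, σ = 0 ∨ σ = 1 := by decide
      rcases hfin (c' a) with hA | hA <;> rcases hfin (c' b) with hB | hB
      · exact Or.inr (Or.inl (config_ext n ℓ h2 hn _ _ hgood hout2
          (by rw [hA, e2a]) (by rw [hB, e2b])))
      · exact Or.inl (config_ext n ℓ h2 hn _ _ hgood hout1
          (by rw [hA, e1a]) (by rw [hB, e1b]))
      · exact Or.inr (Or.inr (Or.inr (config_ext n ℓ h2 hn _ _ hgood hout4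
          (by rw [hA, e4a]) (by rw [hB, e4b]))))
      · exact Or.inr (Or.inr (Or.inl (config_ext n ℓ h2 hn _ _ hgood hout3
          (by rw [hA, e3a]) (by rw [hB, e3b]))))
    · push_neg at hgood
      obtain ⟨x0, hx1, hx2, hbad⟩ := hgood
      exact stepFun_block_zero n ℓ η h2 hn c' x0 hx1 hx2 hbad
end

section
/- (Expected classification time of the random-walk approximation) Let 0 < η < 1/2 and let ℓ ∈ ℕ with ℓ ≥ 2. Define H(p,s) = (1−p)·s/(1−p·s), F₋₁(p,s) = (1 − Real.sqrt(1 − 4·p·(1−p)·s²))/(2·p·s), and G_II(ℓ,s) = F₋₁(η, Real.sqrt(H(1−η,s)))^(ℓ−1) · (Real.sqrt(H(1−η,s)))^(ℓ+1). Then the function s ↦ G_II(ℓ,s) has derivative at s = 1 equal to (ℓ − η·ℓ − η) / (η − 2·η²). (This derivative is the expected classification time of a 1-block of length ℓ in the random-walk approximation of the traffic-majority rule.) -/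
/-- The probability generating function `H(p,s)` of the stopping time of a
hook: a `p`-walk stopped after its first step to the left. -/
noncomputable def Hgf (p s : ℝ) : ℝ := (1 - p) * s / (1 - p * s)

/-- The probability generating function `F₋₁(p,s)` of the first time a
`p`-walk started at 1 hits 0. -/
noncomputable def Fneg1 (p s : ℝ) : ℝ :=
  (1 - Real.sqrt (1 - 4 * p * (1 - p) * s ^ 2)) / (2 * p * s)

/-- The probability generating function `G_II(ℓ,s)` of the classification time
of a 1-block of length `ℓ` in the random-walk approximation of the
traffic-majority rule with parameter `η`. -/
noncomputable def GII (η : ℝ) (ℓ : ℕ) (s : ℝ) : ℝ :=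
  Fneg1 η (Real.sqrt (Hgf (1 - η) s)) ^ (ℓ - 1) *
    Real.sqrt (Hgf (1 - η) s) ^ (ℓ + 1)

/-- Expected classification time of the random-walk
approximation: for `0 < η < 1/2` and `ℓ ≥ 2`, the function `s ↦ G_II(ℓ,s)`
has derivative `(ℓ - η·ℓ - η)/(η - 2·η²)` at `s = 1`; this is the expected
classification time of a 1-block of length `ℓ` in the random-walk
approximation of the traffic-majority rule. -/
theorem GII_deriv_at_one (η : ℝ) (h0 : 0 < η) (h1 : η < 1 / 2) (ℓ : ℕ)
    (hℓ : 2 ≤ ℓ) :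
    HasDerivAt (fun s => GII η ℓ s)
      (((ℓ : ℝ) - η * ℓ - η) / (η - 2 * η ^ 2)) 1 := by
  have hη : η ≠ 0 := ne_of_gt h0
  have h2η : (0:ℝ) < 1 - 2*η := by linarith
  have h2η' : (1:ℝ) - 2*η ≠ 0 := ne_of_gt h2η
  -- derivative of Hgf
  have hnum : HasDerivAt (fun s : ℝ => (1-(1-η))*s) (1-(1-η)) 1 := by
    simpa using (hasDerivAt_id (1:ℝ)).const_mul (1-(1-η))
  have hdenD : HasDerivAt (fun s : ℝ => 1 - (1-η)*s) (-(1-η)) 1 := by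
    simpa using ((hasDerivAt_id (1:ℝ)).const_mul (1-η)).const_sub 1
  have hden : (1:ℝ) - (1-η)*1 ≠ 0 := by
    simpa using hη
  have hH : HasDerivAt (fun s => Hgf (1-η) s) (1/η) 1 := by
    have h := hnum.div hdenD hden
    refine HasDerivAt.congr_deriv h ?_
    simp only [sub_sub_cancel, mul_one]
    field_simp
    ring
  have hHval : Hgf (1-η) 1 = 1 := by
    simp only [Hgf, mul_one]
    simp [hη]
  have hgval : Real.sqrt (Hgf (1-η) 1) = 1 := by rw [hHval, Real.sqrt_one]
  have hG : HasDerivAt (fun s => Real.sqrt (Hgf (1-η) s)) (1/(2*η)) 1 := by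
    have h := hH.sqrt (by rw [hHval]; norm_num)
    rw [hHval, Real.sqrt_one] at h
    convert h using 1
    ring
  -- sqrt of inner u
  have hsq : Real.sqrt (1 - 4*η*(1-η)*(1:ℝ)^2) = 1 - 2*η := by
    rw [show (1 - 4*η*(1-η)*(1:ℝ)^2 : ℝ) = (1-2*η)^2 by ring, Real.sqrt_sq h2η.le]
  have hsq2 : Real.sqrt (1 - 4*η*(1-η)) = 1 - 2*η := by
    rw [show (1 - 4*η*(1-η) : ℝ) = (1-2*η)^2 by ring, Real.sqrt_sq h2η.le]
  have hu : HasDerivAt (fun s => 1 - 4*η*(1-η)*(Real.sqrt (Hgf (1-η) s))^2)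
      (-(4*η*(1-η)*(2*(Real.sqrt (Hgf (1-η) 1))^1*(1/(2*η))))) 1 :=
    ((hG.pow 2).const_mul (4*η*(1-η))).const_sub 1
  have huval : 1 - 4*η*(1-η)*(Real.sqrt (Hgf (1-η) 1))^2 ≠ 0 := by
    rw [hgval]; rw [show (1 - 4*η*(1-η)*(1:ℝ)^2 : ℝ) = (1-2*η)^2 by ring]
    positivity
  have hsu := hu.sqrt huval
  have hnum2 := hsu.const_sub 1
  have hden2 := hG.const_mul (2*η)
  have hden2ne : 2*η*(Real.sqrt (Hgf (1-η) 1)) ≠ 0 := by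
    rw [hgval]; simpa using hη
  have hFfull := hnum2.div hden2 hden2ne
  rw [hgval, hsq] at hFfull
  have hF : HasDerivAt (fun s => Fneg1 η (Real.sqrt (Hgf (1-η) s))) (1/(2*η*(1-2*η))) 1 := by
    refine HasDerivAt.congr_deriv hFfull ?_
    have : (1:ℝ) - η*2 ≠ 0 := by linarith
    field_simp
    ring
  have hF1 : Fneg1 η (Real.sqrt (Hgf (1-η) 1)) = 1 := by
    rw [hgval]
    simp only [Fneg1, one_pow, mul_one, hsq2]
    field_simp
    ring
  have hmain := (hF.pow (ℓ-1)).mul (hG.pow (ℓ+1))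
  simp only [Pi.pow_apply] at hmain
  rw [hF1, hgval] at hmain
  have hcast : ((ℓ - 1 : ℕ) : ℝ) = (ℓ : ℝ) - 1 := by
    have : 1 ≤ ℓ := by omega
    push_cast [this]; ring
  have hd : η - 2*η^2 ≠ 0 := by
    have h' : η - 2*η^2 = η*(1-2*η) := by ring
    rw [h']; exact mul_ne_zero hη h2η'
  refine HasDerivAt.congr_deriv hmain ?_
  simp only [one_pow, mul_one, one_mul, hcast]
  push_cast
  field_simp [hd]
  ring
end
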